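/- There exists a degeneration F_n^1 → F_n^2: the family of basis changes g_t(e_1) = e_1 - t^{-1}e_2, g_t(e_2) = t^{-1}e_2, g_t(e_i) = e_i (3 ≤ i ≤ n) applied to the bracket of F_n^1 yields brackets [x,y]_t whose limit as t → 0 exists and equals the bracket of F_n^2. -/
import Mathlib


/-- Coordinate of `u` at a natural-number index, zero out of range. -/
def cf {m : ℕ} (u : Fin m → ℂ) (j : ℕ) : ℂ := if h : j < m then u ⟨j, h⟩ else 0

/-- The bracket of `F_n^1`: `[e_i, e_1] = e_{i+1}` for `2 ≤ i ≤ n-1`. -/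
def f1br (n : ℕ) (u v : Fin n → ℂ) : Fin n → ℂ :=
  fun k => if 2 ≤ (k : ℕ) then cf u ((k : ℕ) - 1) * cf v 0 else 0

/-- The bracket of `F_n^2`: `[e_1,e_1] = e_3`, `[e_i, e_1] = e_{i+1}` for `3 ≤ i ≤ n-1`. -/
def f2br (n : ℕ) (u v : Fin n → ℂ) : Fin n → ℂ := fun k =>
  if (k : ℕ) = 2 then cf u 0 * cf v 0
  else if 3 ≤ (k : ℕ) then cf u ((k : ℕ) - 1) * cf v 0 else 0

/-- The basis change `g_t`: `e_1 ↦ e_1 - t⁻¹ e_2`, `e_2 ↦ t⁻¹ e_2`, `e_i ↦ e_i` (`i ≥ 3`),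
written in coordinates. -/
noncomputable def g15 (n : ℕ) (t : ℂ) (u : Fin n → ℂ) : Fin n → ℂ := fun k =>
  if (k : ℕ) = 1 then t⁻¹ * (cf u 1 - cf u 0) else u k

/-- The inverse basis change `g_t⁻¹`: `e_1 ↦ e_1 + e_2`, `e_2 ↦ t e_2`, `e_i ↦ e_i`. -/
def g15inv (n : ℕ) (t : ℂ) (u : Fin n → ℂ) : Fin n → ℂ := fun k =>
  if (k : ℕ) = 1 then cf u 0 + t * cf u 1 else u k

/-- Degeneration `F_n^1 → F_n^2`: the transported brackets
`[u,v]_t = g_t [g_t⁻¹ u, g_t⁻¹ v]` converge, as `t → 0` (`t ≠ 0`), to the bracket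
of `F_n^2`. -/
theorem f1_degenerates_to_f2 (n : ℕ) (u v : Fin n → ℂ) :
    Filter.Tendsto (fun t : ℂ => g15 n t (f1br n (g15inv n t u) (g15inv n t v)))
      (nhdsWithin 0 {t : ℂ | t ≠ 0}) (nhds (f2br n u v)) := by
  have key : ∀ t : ℂ, g15 n t (f1br n (g15inv n t u) (g15inv n t v)) =
      fun k => f2br n u v k + t * (if (k : ℕ) = 2 then cf u 1 * cf v 0 else 0) := by
    intro t
    funext k
    have hk : (k : ℕ) < n := k.isLt
    simp only [g15, g15inv, f1br, f2br, cf]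
    split_ifs <;> simp_all <;> try ring
    all_goals omega
  simp only [key]
  apply Filter.Tendsto.mono_left _ nhdsWithin_le_nhds
  rw [tendsto_pi_nhds]
  intro k
  have h := tendsto_const_nhds (x := f2br n u v k) (f := nhds (0:ℂ)) |>.add
    ((continuous_id.mul (continuous_const (y := if (k:ℕ) = 2 then cf u 1 * cf v 0 else 0))).tendsto (0:ℂ))
  simpa using h
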